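/- Let ν > 0 and let u : ℝ × ℝ → ℝ be infinitely differentiable on the open set ℝ × (0,∞), strictly positive there, and satisfy the heat equation ∂u/∂t = ν ∂²u/∂x² on ℝ × (0,∞). Define f(x,t) = -2ν · (∂u/∂x (x,t)) / u(x,t). Then f satisfies the viscous Burgers' equation on ℝ × (0,∞): ∂f/∂t + f · ∂f/∂x = ν · ∂²f/∂x² for all x ∈ ℝ and t > 0. -/

import Mathlib

/-!
Write `f = -2ν ∂ₓU / U`. The heat equation together with the symmetry of second derivatives
gives `∂ₜ∂ₓU = ∂ₓ∂ₜU = ν ∂ₓ³U`, so `∂ₜf`, `f ∂ₓf` and `ν ∂ₓ²f` are rational expressions in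
`U, ∂ₓU, ∂ₓ²U, ∂ₓ³U`, and Burgers' equation becomes an identity between them. The derivatives of
one-variable slices in the statement are identified with the partial derivatives of the smooth
function of `(x, t)`.
-/

open Filter Topology
open scoped ContDiff

section

variable {𝕜 : Type*} [NontriviallyNormedField 𝕜] {E F : Type*}
  [NormedAddCommGroup E] [NormedSpace 𝕜 E] [NormedAddCommGroup F] [NormedSpace 𝕜 F]

theorem DifferentiableAt.hasDerivAt_comp_prodMk_left {g : 𝕜 × E → F} {x : 𝕜} {y : E}
    (hg : DifferentiableAt 𝕜 g (x, y)) :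
    HasDerivAt (fun x' => g (x', y)) (fderiv 𝕜 g (x, y) (1, 0)) x :=
  hg.hasFDerivAt.comp_hasDerivAt x ((hasDerivAt_id x).prodMk (hasDerivAt_const x y))

theorem DifferentiableAt.hasDerivAt_comp_prodMk_right {g : E × 𝕜 → F} {x : E} {y : 𝕜}
    (hg : DifferentiableAt 𝕜 g (x, y)) :
    HasDerivAt (fun y' => g (x, y')) (fderiv 𝕜 g (x, y) (0, 1)) y :=
  hg.hasFDerivAt.comp_hasDerivAt y ((hasDerivAt_const y x).prodMk (hasDerivAt_id y))

theorem ContDiffAt.fderiv_fderiv_apply_comm {n : WithTop ℕ∞} {g : E → F} {q : E}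
    (hg : ContDiffAt 𝕜 n g q) (hn : minSmoothness 𝕜 2 ≤ n) (v w : E) :
    fderiv 𝕜 (fun p => fderiv 𝕜 g p v) q w = fderiv 𝕜 (fun p => fderiv 𝕜 g p w) q v := by
  have hdiff : DifferentiableAt 𝕜 (fderiv 𝕜 g) q :=
    (hg.fderiv_right (m := 1) (le_minSmoothness.trans hn)).differentiableAt one_ne_zero
  have happly (v : E) :
      fderiv 𝕜 (fun p => fderiv 𝕜 g p v) q = (fderiv 𝕜 (fderiv 𝕜 g) q).flip v := by
    simpa using fderiv_clm_apply hdiff (differentiableAt_const v)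
  rw [happly, happly]
  exact (hg.isSymmSndFDerivAt hn).eq w v

end

noncomputable def partialX (g : ℝ × ℝ → ℝ) (p : ℝ × ℝ) : ℝ := fderiv ℝ g p (1, 0)

noncomputable def partialT (g : ℝ × ℝ → ℝ) (p : ℝ × ℝ) : ℝ := fderiv ℝ g p (0, 1)

section Partials

variable {g : ℝ × ℝ → ℝ} {s : Set (ℝ × ℝ)} {x t : ℝ}

theorem IsOpen.eventually_prodMk_left_mem (hs : IsOpen s) (hp : (x, t) ∈ s) :
    ∀ᶠ x' in 𝓝 x, (x', t) ∈ s :=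
  (continuous_id.prodMk continuous_const).continuousAt.preimage_mem_nhds (hs.mem_nhds hp)

theorem ContDiffOn.partialX_of_isOpen (hg : ContDiffOn ℝ ∞ g s) (hs : IsOpen s) :
    ContDiffOn ℝ ∞ (partialX g) s :=
  (hg.fderiv_of_isOpen hs (by simp)).clm_apply contDiffOn_const

theorem ContDiffOn.partialT_of_isOpen (hg : ContDiffOn ℝ ∞ g s) (hs : IsOpen s) :
    ContDiffOn ℝ ∞ (partialT g) s :=
  (hg.fderiv_of_isOpen hs (by simp)).clm_apply contDiffOn_const

theorem ContDiffOn.hasDerivAt_partialX (hg : ContDiffOn ℝ ∞ g s) (hs : IsOpen s)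
    (hp : (x, t) ∈ s) : HasDerivAt (fun x' => g (x', t)) (partialX g (x, t)) x :=
  ((hg.differentiableOn (by simp)).differentiableAt (hs.mem_nhds hp)).hasDerivAt_comp_prodMk_left

theorem ContDiffOn.hasDerivAt_partialT (hg : ContDiffOn ℝ ∞ g s) (hs : IsOpen s)
    (hp : (x, t) ∈ s) : HasDerivAt (fun t' => g (x, t')) (partialT g (x, t)) t :=
  ((hg.differentiableOn (by simp)).differentiableAt (hs.mem_nhds hp)).hasDerivAt_comp_prodMk_right

theorem partialT_partialX_comm (hg : ContDiffAt ℝ 2 g (x, t)) :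
    partialT (partialX g) (x, t) = partialX (partialT g) (x, t) :=
  hg.fderiv_fderiv_apply_comm (by simp) _ _

theorem deriv_deriv_eq_partialX_partialX (hg : ContDiffOn ℝ ∞ g s) (hs : IsOpen s)
    (hp : (x, t) ∈ s) :
    deriv (fun x' => deriv (fun x'' => g (x'', t)) x') x = partialX (partialX g) (x, t) := by
  have hline : (fun x' => deriv (fun x'' => g (x'', t)) x') =ᶠ[𝓝 x]
      fun x' => partialX g (x', t) :=
    (hs.eventually_prodMk_left_mem hp).mono fun x' hx' => (hg.hasDerivAt_partialX hs hx').deriv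
  rw [hline.deriv_eq]
  exact ((hg.partialX_of_isOpen hs).hasDerivAt_partialX hs hp).deriv

end Partials

noncomputable def coleHopf (ν : ℝ) (U : ℝ × ℝ → ℝ) (p : ℝ × ℝ) : ℝ :=
  -2 * ν * partialX U p / U p

section ColeHopf

variable {ν : ℝ} {U : ℝ × ℝ → ℝ} {s : Set (ℝ × ℝ)} {x t : ℝ}

theorem ContDiffOn.coleHopf_of_isOpen (hU : ContDiffOn ℝ ∞ U s) (hs : IsOpen s)
    (hU0 : ∀ p ∈ s, U p ≠ 0) : ContDiffOn ℝ ∞ (coleHopf ν U) s :=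
  (contDiffOn_const.mul (hU.partialX_of_isOpen hs)).div hU hU0

theorem partialX_coleHopf (hU : ContDiffOn ℝ ∞ U s) (hs : IsOpen s) (hU0 : ∀ p ∈ s, U p ≠ 0)
    (hp : (x, t) ∈ s) :
    partialX (coleHopf ν U) (x, t) = -2 * ν *
      ((partialX (partialX U) (x, t) * U (x, t) - partialX U (x, t) ^ 2) / U (x, t) ^ 2) := by
  have h := (((hU.partialX_of_isOpen hs).hasDerivAt_partialX hs hp).const_mul (-2 * ν)).div
    (hU.hasDerivAt_partialX hs hp) (hU0 _ hp)
  rw [((hU.coleHopf_of_isOpen hs hU0).hasDerivAt_partialX hs hp).unique h]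
  ring

theorem partialX_partialX_coleHopf (hU : ContDiffOn ℝ ∞ U s) (hs : IsOpen s)
    (hU0 : ∀ p ∈ s, U p ≠ 0) (hp : (x, t) ∈ s) :
    partialX (partialX (coleHopf ν U)) (x, t) = -2 * ν *
      (partialX (partialX (partialX U)) (x, t) * U (x, t) ^ 2
        - 3 * partialX U (x, t) * partialX (partialX U) (x, t) * U (x, t)
        + 2 * partialX U (x, t) ^ 3) / U (x, t) ^ 3 := by
  have hUx := hU.partialX_of_isOpen hs
  have dU := hU.hasDerivAt_partialX hs hp
  have dUx := hUx.hasDerivAt_partialX hs hp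
  have dUxx := (hUx.partialX_of_isOpen hs).hasDerivAt_partialX hs hp
  have hline := (hs.eventually_prodMk_left_mem hp).mono fun x' hx' =>
    partialX_coleHopf (ν := ν) hU hs hU0 hx'
  have h := ((((dUxx.fun_mul dU).fun_sub (dUx.fun_pow 2)).fun_div (dU.fun_pow 2)
    (pow_ne_zero 2 (hU0 _ hp))).const_mul (-2 * ν)).congr_of_eventuallyEq hline
  rw [(((hU.coleHopf_of_isOpen hs hU0).partialX_of_isOpen hs).hasDerivAt_partialX hs hp).unique h]
  have := hU0 _ hp
  field_simp
  ring

theorem partialT_coleHopf (hU : ContDiffOn ℝ ∞ U s) (hs : IsOpen s) (hU0 : ∀ p ∈ s, U p ≠ 0)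
    (hp : (x, t) ∈ s) :
    partialT (coleHopf ν U) (x, t) = -2 * ν *
      (partialT (partialX U) (x, t) * U (x, t) - partialX U (x, t) * partialT U (x, t)) /
        U (x, t) ^ 2 := by
  have h := (((hU.partialX_of_isOpen hs).hasDerivAt_partialT hs hp).const_mul (-2 * ν)).div
    (hU.hasDerivAt_partialT hs hp) (hU0 _ hp)
  rw [((hU.coleHopf_of_isOpen hs hU0).hasDerivAt_partialT hs hp).unique h]
  ring

theorem partialT_partialX_of_heat (hU : ContDiffOn ℝ ∞ U s) (hs : IsOpen s)
    (heat : ∀ p ∈ s, partialT U p = ν * partialX (partialX U) p) (hp : (x, t) ∈ s) :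
    partialT (partialX U) (x, t) = ν * partialX (partialX (partialX U)) (x, t) := by
  have hline := (hs.eventually_prodMk_left_mem hp).mono fun x' hx' => heat (x', t) hx'
  have dUxx := ((hU.partialX_of_isOpen hs).partialX_of_isOpen hs).hasDerivAt_partialX hs hp
  have h := (dUxx.const_mul ν).congr_of_eventuallyEq hline
  rw [partialT_partialX_comm ((hU.contDiffAt (hs.mem_nhds hp)).of_le (by norm_cast)),
    ((hU.partialT_of_isOpen hs).hasDerivAt_partialX hs hp).unique h]

theorem burgers_coleHopf_of_heat (hU : ContDiffOn ℝ ∞ U s) (hs : IsOpen s)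
    (hU0 : ∀ p ∈ s, U p ≠ 0) (heat : ∀ p ∈ s, partialT U p = ν * partialX (partialX U) p)
    (hp : (x, t) ∈ s) :
    partialT (coleHopf ν U) (x, t) + coleHopf ν U (x, t) * partialX (coleHopf ν U) (x, t) =
      ν * partialX (partialX (coleHopf ν U)) (x, t) := by
  rw [partialT_coleHopf hU hs hU0 hp, partialX_coleHopf hU hs hU0 hp,
    partialX_partialX_coleHopf hU hs hU0 hp, partialT_partialX_of_heat hU hs heat hp,
    heat _ hp, coleHopf]
  have := hU0 _ hp
  field_simp
  ring

end ColeHopf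

theorem coleHopf_solves_burgers_general (ν : ℝ) (u : ℝ → ℝ → ℝ)
    (hu_smooth : ContDiffOn ℝ (⊤ : ℕ∞) (fun p : ℝ × ℝ => u p.1 p.2) (Set.univ ×ˢ Set.Ioi 0))
    (hu_pos : ∀ x : ℝ, ∀ t ∈ Set.Ioi (0 : ℝ), 0 < u x t)
    (hu_heat : ∀ x : ℝ, ∀ t ∈ Set.Ioi (0 : ℝ),
      deriv (fun t' => u x t') t = ν * deriv (fun x' => deriv (fun x'' => u x'' t) x') x)
    (f : ℝ → ℝ → ℝ)
    (hf : ∀ x t : ℝ, f x t = -2 * ν * deriv (fun x' => u x' t) x / u x t) :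
    ∀ x : ℝ, ∀ t ∈ Set.Ioi (0 : ℝ),
      deriv (fun t' => f x t') t + f x t * deriv (fun x' => f x' t) x =
        ν * deriv (fun x' => deriv (fun x'' => f x'' t) x') x := by
  intro x t ht
  set U : ℝ × ℝ → ℝ := fun p => u p.1 p.2
  set S : Set (ℝ × ℝ) := Set.univ ×ˢ Set.Ioi 0
  have hS : IsOpen S := isOpen_univ.prod isOpen_Ioi
  have hU0 : ∀ p ∈ S, U p ≠ 0 := fun p hp => (hu_pos p.1 p.2 hp.2).ne'
  have hf_eq (x' : ℝ) {t' : ℝ} (ht' : 0 < t') : f x' t' = coleHopf ν U (x', t') := by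
    rw [hf, coleHopf, (hu_smooth.hasDerivAt_partialX hS ⟨trivial, ht'⟩).deriv]
  have heat : ∀ p ∈ S, partialT U p = ν * partialX (partialX U) p := by
    rintro ⟨x', t'⟩ hp
    rw [← (hu_smooth.hasDerivAt_partialT hS hp).deriv,
      ← deriv_deriv_eq_partialX_partialX hu_smooth hS hp]
    exact hu_heat x' t' hp.2
  have hF := hu_smooth.coleHopf_of_isOpen hS hU0 (ν := ν)
  have hp : (x, t) ∈ S := ⟨trivial, ht⟩
  have hx_slice : (fun x' => f x' t) = fun x' => coleHopf ν U (x', t) :=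
    funext fun x' => hf_eq x' ht
  have ht_slice : (fun t' => f x t') =ᶠ[𝓝 t] fun t' => coleHopf ν U (x, t') :=
    eventually_of_mem (Ioi_mem_nhds ht) fun t' ht' => hf_eq x ht'
  rw [ht_slice.deriv_eq, hx_slice, hf_eq x ht, deriv_deriv_eq_partialX_partialX hF hS hp,
    (hF.hasDerivAt_partialT hS hp).deriv, (hF.hasDerivAt_partialX hS hp).deriv]
  exact burgers_coleHopf_of_heat hu_smooth hS hU0 heat hp

/-- Cole–Hopf transformation: if `u` is smooth, strictly positive, and solves the heat
equation `∂u/∂t = ν ∂²u/∂x²` on `ℝ × (0, ∞)`, then `f = -2ν (∂u/∂x) / u` solves the viscous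
Burgers' equation `∂f/∂t + f ∂f/∂x = ν ∂²f/∂x²` on `ℝ × (0, ∞)`. -/
theorem coleHopf_solves_burgers (ν : ℝ) (hν : 0 < ν) (u : ℝ → ℝ → ℝ)
    (hu_smooth : ContDiffOn ℝ (⊤ : ℕ∞) (fun p : ℝ × ℝ => u p.1 p.2) (Set.univ ×ˢ Set.Ioi 0))
    (hu_pos : ∀ x : ℝ, ∀ t ∈ Set.Ioi (0 : ℝ), 0 < u x t)
    (hu_heat : ∀ x : ℝ, ∀ t ∈ Set.Ioi (0 : ℝ),
      deriv (fun t' => u x t') t = ν * deriv (fun x' => deriv (fun x'' => u x'' t) x') x)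
    (f : ℝ → ℝ → ℝ)
    (hf : ∀ x t : ℝ, f x t = -2 * ν * deriv (fun x' => u x' t) x / u x t) :
    ∀ x : ℝ, ∀ t ∈ Set.Ioi (0 : ℝ),
      deriv (fun t' => f x t') t + f x t * deriv (fun x' => f x' t) x =
        ν * deriv (fun x' => deriv (fun x'' => f x'' t) x') x :=
  coleHopf_solves_burgers_general ν u hu_smooth hu_pos hu_heat f hf
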